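/- Under the HO-GSVD assumptions (A stacked full column rank, π > 0), if Z is an orthonormal matrix diagonalizing T_π and R is the invertible factor from the thin QR factorization of A, then V := RᵀZ is invertible and diagonalizes S_π: V^{-1} S_π V is diagonal, with eigenvalues ς = ((1+πN)τ − 1)/(N−1) where τ ranges over the eigenvalues of T_π. -/

import Mathlib

/-!
With `Bᵢ = QᵢᵀQᵢ + πI` we have `Dᵢ = RᵀBᵢR`, so `S_π` is `Rᵀ M R⁻ᵀ / (N(N-1))` with
`M = ∑_{i<j} (BᵢBⱼ⁻¹ + BⱼBᵢ⁻¹)`. Adding the diagonal terms `BᵢBᵢ⁻¹ = I` turns `M + N I` into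
`(∑ Bᵢ)(∑ Bⱼ⁻¹) = (1 + πN) I · N T_π`, because `∑ QᵢᵀQᵢ = I`. Hence
`S_π = Rᵀ ((1 + πN) T_π - I) R⁻ᵀ / (N - 1)`, and conjugating by `V = RᵀZ` leaves
`((1 + πN) ZᵀT_πZ - I) / (N - 1)`, which is diagonal.
-/

open Matrix BigOperators Finset

theorem Finset.sum_Ioi_add_swap_add_sum_diag {ι M : Type*} [Fintype ι] [LinearOrder ι]
    [LocallyFiniteOrderTop ι] [LocallyFiniteOrderBot ι] [AddCommMonoid M] (f : ι → ι → M) :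
    ∑ i, ∑ j ∈ Ioi i, (f i j + f j i) + ∑ i, f i i = ∑ i, ∑ j, f i j := by
  have hswap : ∑ i, ∑ j ∈ Ioi i, f j i = ∑ i, ∑ j ∈ Iio i, f i j :=
    sum_comm' (by simp)
  have hrow (i : ι) : ∑ j ∈ Iio i, f i j + (f i i + ∑ j ∈ Ioi i, f i j) = ∑ j, f i j := by
    rw [← sum_insert (s := Ioi i) (by simp), Ioi_insert,
      ← sum_filter_add_sum_filter_not univ (· < i)]
    simp [filter_gt_eq_Iio, filter_le_eq_Ici]
  simp only [sum_add_distrib, hswap, ← hrow]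
  abel

namespace Matrix

variable {n K : Type*} [Fintype n] [DecidableEq n] [CommRing K]

theorem sum_Ioi_mul_inv_add_swap {ι : Type*} [Fintype ι] [LinearOrder ι]
    [LocallyFiniteOrderTop ι] [LocallyFiniteOrderBot ι]
    (B : ι → Matrix n n K) (hB : ∀ i, IsUnit (B i).det) :
    ∑ i, ∑ j ∈ Ioi i, (B i * (B j)⁻¹ + B j * (B i)⁻¹) =
      (∑ i, B i) * (∑ i, (B i)⁻¹) - Fintype.card ι • 1 := by
  rw [eq_sub_iff_add_eq, sum_mul_sum, ← sum_Ioi_add_swap_add_sum_diag]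
  simp [mul_nonsing_inv _ (hB _)]

theorem mul_mul_mul_inv_mul_mul (P B C R : Matrix n n K) (hR : IsUnit R.det) :
    P * B * R * (P * C * R)⁻¹ = P * (B * C⁻¹) * P⁻¹ := by
  simp only [mul_inv_rev, Matrix.mul_assoc, mul_nonsing_inv_cancel_left _ _ hR]

theorem sum_Ioi_conj_mul_inv_add_swap {ι : Type*} [Fintype ι] [LinearOrder ι]
    [LocallyFiniteOrderTop ι] [LocallyFiniteOrderBot ι] (P R : Matrix n n K) (hR : IsUnit R.det)
    (B : ι → Matrix n n K) (hB : ∀ i, IsUnit (B i).det) :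
    ∑ i, ∑ j ∈ Ioi i, (P * B i * R * (P * B j * R)⁻¹ + P * B j * R * (P * B i * R)⁻¹) =
      P * ((∑ i, B i) * (∑ i, (B i)⁻¹) - Fintype.card ι • 1) * P⁻¹ := by
  simp only [mul_mul_mul_inv_mul_mul _ _ _ _ hR, ← Matrix.add_mul, ← Matrix.mul_add, ← sum_mul,
    ← mul_sum, sum_Ioi_mul_inv_add_swap B hB]

theorem inv_mul_conj_mul (P X Z : Matrix n n K) (hP : IsUnit P.det) :
    (P * Z)⁻¹ * (P * X * P⁻¹) * (P * Z) = Z⁻¹ * X * Z := by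
  simp only [mul_inv_rev, Matrix.mul_assoc, nonsing_inv_mul_cancel_left _ _ hP]

theorem transpose_mul_mul_add_smul_transpose_mul {m : Type*} [Fintype m]
    (Q : Matrix m n K) (R : Matrix n n K) (p : K) :
    (Q * R)ᵀ * (Q * R) + p • (Rᵀ * R) = Rᵀ * (Qᵀ * Q + p • 1) * R := by
  simp only [transpose_mul, Matrix.mul_add, Matrix.add_mul, Matrix.mul_smul, Matrix.smul_mul,
    Matrix.mul_one, Matrix.mul_assoc]

end Matrix

theorem Matrix.sum_transpose_mul_self_add_smul_one {n K : Type*} [DecidableEq n] [CommRing K]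
    {ι : Type*} [Fintype ι] {m : ι → Type*}
    [∀ i, Fintype (m i)] {Q : ∀ i, Matrix (m i) n K} (hQ : ∑ i, (Q i)ᵀ * Q i = 1) (p : K) :
    ∑ i, ((Q i)ᵀ * Q i + p • 1) = (1 + p * Fintype.card ι) • (1 : Matrix n n K) := by
  rw [sum_add_distrib, hQ, sum_const, card_univ, ← Nat.cast_smul_eq_nsmul K, smul_smul,
    add_smul, one_smul, mul_comm]

theorem Matrix.posDef_transpose_mul_self_add_smul_one {m n : Type*} [Fintype m] [Fintype n]
    [DecidableEq n] (Q : Matrix m n ℝ) {p : ℝ} (hp : 0 < p) :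
    (Qᵀ * Q + p • (1 : Matrix n n ℝ)).PosDef :=
  conjTranspose_eq_transpose_of_trivial Q ▸
    PosDef.posSemidef_add (posSemidef_conjTranspose_mul_self Q) (PosDef.one.smul hp)

theorem stmt11 {N n : ℕ} (hN : 2 ≤ N) {m : Fin N → ℕ}
    (Q : ∀ i, Matrix (Fin (m i)) (Fin n) ℝ)
    (hQ : ∑ i, (Q i)ᵀ * Q i = 1)
    (p : ℝ) (hp : 0 < p)
    (R : Matrix (Fin n) (Fin n) ℝ) (hR : IsUnit R.det)
    (A : ∀ i, Matrix (Fin (m i)) (Fin n) ℝ) (hA : ∀ i, A i = Q i * R)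
    (D : Fin N → Matrix (Fin n) (Fin n) ℝ)
    (hD : ∀ i, D i = (A i)ᵀ * A i + p • (Rᵀ * R))
    (S T : Matrix (Fin n) (Fin n) ℝ)
    (hS : S = ((N : ℝ) * ((N : ℝ) - 1))⁻¹ •
      ∑ i, ∑ j ∈ Finset.Ioi i, (D i * (D j)⁻¹ + D j * (D i)⁻¹))
    (hT : T = (N : ℝ)⁻¹ •
      ∑ i, ((Q i)ᵀ * Q i + p • (1 : Matrix (Fin n) (Fin n) ℝ))⁻¹)
    (Z : Matrix (Fin n) (Fin n) ℝ) (hZ : Zᵀ * Z = 1)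
    (hdiag : (Zᵀ * T * Z).IsDiag) :
    IsUnit (Rᵀ * Z).det ∧ ((Rᵀ * Z)⁻¹ * S * (Rᵀ * Z)).IsDiag ∧
      ∀ k, ((Rᵀ * Z)⁻¹ * S * (Rᵀ * Z)) k k =
        ((1 + p * N) * (Zᵀ * T * Z) k k - 1) / ((N : ℝ) - 1) := by
  have hN1 : (N : ℝ) - 1 ≠ 0 := sub_ne_zero.mpr (by norm_cast; omega)
  set B := fun i => (Q i)ᵀ * Q i + p • (1 : Matrix (Fin n) (Fin n) ℝ)
  have hBdet (i : Fin N) : IsUnit (B i).det :=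
    (isUnit_iff_isUnit_det _).mp (posDef_transpose_mul_self_add_smul_one (Q i) hp).isUnit
  have hDB (i : Fin N) : D i = Rᵀ * B i * R := by
    rw [hD, hA, transpose_mul_mul_add_smul_transpose_mul]
  have hsumB : ∑ i, B i = (1 + p * N) • 1 := by
    simpa using sum_transpose_mul_self_add_smul_one hQ p
  have hsumBinv : ∑ i, (B i)⁻¹ = (N : ℝ) • T := by
    rw [hT, smul_smul, mul_inv_cancel₀ (by positivity), one_smul]
  have hM : (∑ i, B i) * (∑ i, (B i)⁻¹) - Fintype.card (Fin N) • 1 =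
      (N : ℝ) • ((1 + p * N) • T - 1) := by
    rw [hsumB, hsumBinv, Fintype.card_fin, ← Nat.cast_smul_eq_nsmul ℝ, smul_mul_smul_comm,
      Matrix.one_mul]
    module
  have hS' : S = Rᵀ * (((N : ℝ) - 1)⁻¹ • ((1 + p * N) • T - 1)) * (Rᵀ)⁻¹ := by
    simp only [hS, hDB, sum_Ioi_conj_mul_inv_add_swap _ _ hR B hBdet, hM, Matrix.mul_smul,
      Matrix.smul_mul, smul_smul]
    congr 1
    field_simp
  have hconj : (Rᵀ * Z)⁻¹ * S * (Rᵀ * Z) =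
      ((N : ℝ) - 1)⁻¹ • ((1 + p * N) • (Zᵀ * T * Z) - 1) := by
    rw [hS', inv_mul_conj_mul _ _ _ (by rwa [det_transpose]), inv_eq_left_inv hZ]
    simp only [Matrix.mul_smul, Matrix.smul_mul, Matrix.mul_sub, Matrix.sub_mul, Matrix.mul_one,
      hZ]
  refine ⟨?_, hconj ▸ ((hdiag.smul _).sub isDiag_one).smul _, fun k => ?_⟩
  · rw [det_mul, det_transpose]
    exact hR.mul (isUnit_det_of_left_inverse hZ)
  · rw [hconj]
    simp only [Matrix.smul_apply, Matrix.sub_apply, one_apply_eq, smul_eq_mul]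
    field_simp
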